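/- The sum of the squares of the quantum dimensions satisfies ∑_{n=0}^{r−2} Δ_n² = r/(2 sin²(π/r)); equivalently, (sin(π/r))² · (2/r) · ∑_{n=0}^{r−2} Δ_n² = 1. -/

import Mathlib

open Finset

/-- `A = exp(πi/(2r))`, the first primitive `4r`-th root of unity. -/
noncomputable def A (r : ℕ) : ℂ := Complex.exp (Real.pi * Complex.I / (2 * r))

/-- The q-deformed quantum integer `[n] = (A^(2n) − A^(−2n))/(A² − A^(−2))`. -/
noncomputable def qint (r n : ℕ) : ℂ :=
  ((A r) ^ (2 * n) - (A r) ^ (-(2 * (n : ℤ)))) / ((A r) ^ 2 - (A r) ^ (-2 : ℤ))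

/-- `Δ_n = (−1)^n (A^(2n+2) − A^(−2n−2))/(A² − A^(−2))`. -/
noncomputable def Delta (r n : ℕ) : ℂ :=
  (-1) ^ n * ((A r) ^ (2 * n + 2) - (A r) ^ (-(2 * (n : ℤ)) - 2)) /
    ((A r) ^ 2 - (A r) ^ (-2 : ℤ))

/-- A triple `(a,b,c)` of elements of `I = {0,…,r−2}` is admissible if
`a+b+c ≤ 2r−4` and `a+b−c`, `b+c−a`, `c+a−b` are non-negative and even. -/
def Admissible (r a b c : ℕ) : Prop :=
  a + b + c ≤ 2 * r - 4 ∧ c ≤ a + b ∧ a ≤ b + c ∧ b ≤ c + a ∧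
    Even (a + b - c) ∧ Even (b + c - a) ∧ Even (c + a - b)

/-- The q-deformed quantum factorial `[n]! = ∏_{1 ≤ m ≤ n} [m]` (with `[0]! = 1`). -/
noncomputable def qfact (r n : ℕ) : ℂ := ∏ m ∈ Finset.Icc 1 n, qint r m

instance (r a b c : ℕ) : Decidable (Admissible r a b c) := by
  unfold Admissible; infer_instance

/-! Writing `x = A^(2n+2)` and `y = A²`, `Δ_n = ±(x - x⁻¹)/(y - y⁻¹)`, so with `ζ = A⁴ = exp(2πi/r)`
we get `Δ_n² = (ζ^(n+1) + ζ^(-n-1) - 2)/(ζ + ζ⁻¹ - 2)`. The numerator vanishes at `n + 1 = 0`, so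
the sum runs over a full set of powers of the primitive `r`-th root `ζ`; there `∑ ζ^k = ∑ ζ^(-k) = 0`,
leaving `-2r`, while `ζ + ζ⁻¹ - 2 = 2 cos(2π/r) - 2 = -4 sin²(π/r)`. -/

lemma sub_inv_sq {K : Type*} [Field K] {x : K} (hx : x ≠ 0) :
    (x - x⁻¹) ^ 2 = x ^ 2 + (x ^ 2)⁻¹ - 2 := by
  rw [sub_sq, mul_assoc, mul_inv_cancel₀ hx, inv_pow]
  ring

lemma A_ne_zero (r : ℕ) : A r ≠ 0 := Complex.exp_ne_zero _

lemma A_pow_four (r : ℕ) : A r ^ 4 = Complex.exp (2 * Real.pi * Complex.I / r) := by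
  rw [A, ← Complex.exp_nat_mul]
  ring_nf

lemma isPrimitiveRoot_A_pow_four {r : ℕ} (hr : r ≠ 0) : IsPrimitiveRoot (A r ^ 4) r :=
  A_pow_four r ▸ Complex.isPrimitiveRoot_exp r hr

lemma Delta_sq (r n : ℕ) :
    Delta r n ^ 2 =
      ((A r ^ 4) ^ (n + 1) + ((A r ^ 4) ^ (n + 1))⁻¹ - 2) / (A r ^ 4 + (A r ^ 4)⁻¹ - 2) := by
  have hA := A_ne_zero r
  have hnum : A r ^ (-(2 * (n : ℤ)) - 2) = (A r ^ (2 * n + 2))⁻¹ := by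
    rw [← zpow_natCast, ← zpow_neg]; push_cast; ring_nf
  have hden : A r ^ (-2 : ℤ) = (A r ^ 2)⁻¹ := by
    rw [← zpow_natCast, ← zpow_neg]; rfl
  rw [Delta, hnum, hden, div_pow, mul_pow, ← pow_mul, pow_mul', neg_one_sq, one_pow, one_mul,
    sub_inv_sq (pow_ne_zero _ hA), sub_inv_sq (pow_ne_zero _ hA), ← pow_mul, ← pow_mul,
    ← pow_mul]
  ring_nf

lemma IsPrimitiveRoot.sum_pow_add_inv_pow_sub_two {K : Type*} [Field K] {ζ : K} {k : ℕ}
    (hζ : IsPrimitiveRoot ζ k) (hk : 1 < k) :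
    ∑ i ∈ range k, (ζ ^ i + (ζ ^ i)⁻¹ - 2) = -2 * k := by
  simp only [sum_sub_distrib, sum_add_distrib, ← inv_pow, hζ.geom_sum_eq_zero hk,
    hζ.inv.geom_sum_eq_zero hk, sum_const, card_range, nsmul_eq_mul]
  ring

lemma A_pow_four_add_inv_sub_two (r : ℕ) :
    A r ^ 4 + (A r ^ 4)⁻¹ - 2 = -4 * ((Real.sin (Real.pi / r) : ℝ) : ℂ) ^ 2 := by
  have h2cos : A r ^ 4 + (A r ^ 4)⁻¹ = 2 * Complex.cos (2 * (Real.pi / r)) := by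
    rw [Complex.two_cos, A_pow_four, ← Complex.exp_neg]
    ring_nf
  rw [h2cos, Complex.cos_two_mul_eq_one_sub, Complex.ofReal_sin]
  push_cast
  ring

/-- `∑_{n=0}^{r−2} Δ_n² = r/(2 sin²(π/r))`; equivalently
`sin²(π/r) · (2/r) · ∑_{n=0}^{r−2} Δ_n² = 1`. -/
theorem sum_Delta_sq (r : ℕ) (hr : 3 ≤ r) :
    (∑ n ∈ Finset.range (r - 1), (Delta r n) ^ 2 =
        (r : ℂ) / (2 * ((Real.sin (Real.pi / r) : ℝ) : ℂ) ^ 2)) ∧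
      (((Real.sin (Real.pi / r) : ℝ) : ℂ) ^ 2 * (2 / (r : ℂ)) *
        ∑ n ∈ Finset.range (r - 1), (Delta r n) ^ 2 = 1) := by
  set s : ℂ := ((Real.sin (Real.pi / r) : ℝ) : ℂ)
  have hζ := isPrimitiveRoot_A_pow_four (by omega : r ≠ 0)
  have hs : s ≠ 0 := by
    have hr1 : (1 : ℝ) < r := by exact_mod_cast (by omega : 1 < r)
    exact Complex.ofReal_ne_zero.mpr (Real.sin_pos_of_pos_of_lt_pi (by positivity)
      (div_lt_self Real.pi_pos hr1)).ne'
  have hsum : ∑ n ∈ range (r - 1), Delta r n ^ 2 = r / (2 * s ^ 2) := calc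
    _ = (∑ k ∈ range r, ((A r ^ 4) ^ k + ((A r ^ 4) ^ k)⁻¹ - 2)) / (A r ^ 4 + (A r ^ 4)⁻¹ - 2) := by
      have hshift := sum_range_succ' (fun k ↦ (A r ^ 4) ^ k + ((A r ^ 4) ^ k)⁻¹ - 2) (r - 1)
      rw [Nat.sub_add_cancel (by omega)] at hshift
      rw [hshift, pow_zero, inv_one, one_add_one_eq_two, sub_self, add_zero, sum_div]
      exact sum_congr rfl fun n _ ↦ Delta_sq r n
    _ = -2 * r / (-4 * s ^ 2) := by
      rw [hζ.sum_pow_add_inv_pow_sub_two (by omega), A_pow_four_add_inv_sub_two]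
    _ = r / (2 * s ^ 2) := by
      field_simp
      ring
  refine ⟨hsum, ?_⟩
  have hr0 : (r : ℂ) ≠ 0 := by exact_mod_cast (by omega : r ≠ 0)
  rw [hsum]
  field_simp
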